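/- For α > 0, n ≥ 1, and 0 ≤ j ≤ i ≤ n, with R(n;i,j) = (-1)^{i+j}(α+i+j)·binom(α+n+i, n-j)·binom(α+n+j, n-i)·binom(α+i+j-1, i)·binom(α+i+j-1, j) and C(k;i,j) = (-1)^{i+j}(α+2k)·binom(k,i)·binom(k,j)·binom(α+k+i-1, k)·binom(α+k+j-1, k), one has R(n+1;i,j) - R(n;i,j) = C(n+1;i,j). -/
import Mathlib


/-- Generalized binomial coefficient `x(x-1)⋯(x-k+1)/k!` with real upper argument. -/
noncomputable def gbinom (x : ℝ) (k : ℕ) : ℝ :=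
  (∏ i ∈ Finset.range k, (x - i)) / (Nat.factorial k : ℝ)

/-- `R(n;i,j)`, the claimed entry of the inverse Hilbert-type matrix. -/
noncomputable def Rhil (α : ℝ) (n i j : ℕ) : ℝ :=
  (-1 : ℝ) ^ (i + j) * (α + i + j) * gbinom (α + n + i) (n - j) * gbinom (α + n + j) (n - i) *
    gbinom (α + i + j - 1) i * gbinom (α + i + j - 1) j

/-- `C(k;i,j)`, the summand of the kernel polynomial coefficient. -/
noncomputable def Chil (α : ℝ) (k i j : ℕ) : ℝ :=
  (-1 : ℝ) ^ (i + j) * (α + 2 * k) * gbinom (k : ℝ) i * gbinom (k : ℝ) j *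
    gbinom (α + k + i - 1) k * gbinom (α + k + j - 1) k

lemma gbinom_succ_succ (x : ℝ) (k : ℕ) :
    gbinom (x + 1) (k + 1) = (x + 1) / ((k : ℝ) + 1) * gbinom x k := by
  unfold gbinom
  rw [Finset.prod_range_succ']
  have hk : (Nat.factorial k : ℝ) ≠ 0 := Nat.cast_ne_zero.2 k.factorial_ne_zero
  have h : (∏ i ∈ Finset.range k, (x + 1 - ((i : ℕ) + 1 : ℕ))) = ∏ i ∈ Finset.range k, (x - i) := by
    apply Finset.prod_congr rfl; intro i _; push_cast; ring
  rw [h, Nat.factorial_succ]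
  push_cast
  field_simp
  ring

lemma prod_desc (m k : ℕ) : (∏ i ∈ Finset.range k, ((m : ℝ) - i)) = (m.descFactorial k : ℝ) := by
  induction k with
  | zero => simp
  | succ k ih =>
    rw [Finset.prod_range_succ, ih, Nat.descFactorial_succ]
    rcases le_or_gt k m with h | h
    · push_cast [h]; ring
    · rw [Nat.descFactorial_of_lt h]; simp

lemma gbinom_nat (m k : ℕ) : gbinom (m : ℝ) k = (Nat.choose m k : ℝ) := by
  unfold gbinom
  rw [prod_desc, Nat.descFactorial_eq_factorial_mul_choose]
  have hk : (Nat.factorial k : ℝ) ≠ 0 := Nat.cast_ne_zero.2 k.factorial_ne_zero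
  push_cast
  field_simp

lemma gbinom_split (x : ℝ) (n j : ℕ) (hj : j ≤ n) :
    (Nat.choose (n + 1) j : ℝ) * ((n : ℝ) + 1 - j) * gbinom x (n + 1) =
    (x - n + j) * gbinom x (n - j) * gbinom (x - n + j - 1) j := by
  unfold gbinom
  have hsplit : n + 1 = (n - j) + (j + 1) := by omega
  rw [hsplit, Finset.prod_range_add, Finset.prod_range_succ']
  have hc : ((n - j : ℕ) : ℝ) = (n : ℝ) - j := by push_cast [hj]; ring
  have h1 : (∏ i ∈ Finset.range j, (x - ((n - j : ℕ) + ((i : ℕ) + 1 : ℕ) : ℕ))) =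
      ∏ i ∈ Finset.range j, (x - n + j - 1 - i) := by
    apply Finset.prod_congr rfl; intro i _
    push_cast [hj]; ring
  have h2 : x - ((n - j : ℕ) + (0 : ℕ) : ℕ) = x - n + j := by
    push_cast [hj]; ring
  rw [h1, h2]
  have hfac : (Nat.choose (n + 1) j) * j.factorial * ((n + 1 - j).factorial) = (n + 1).factorial :=
    Nat.choose_mul_factorial_mul_factorial (by omega)
  have hfac2 : (n + 1 - j).factorial = (n + 1 - j) * (n - j).factorial := by
    rw [show n + 1 - j = (n - j) + 1 from by omega, Nat.factorial_succ]
  have hne : ∀ m : ℕ, (Nat.factorial m : ℝ) ≠ 0 := fun m => Nat.cast_ne_zero.2 m.factorial_ne_zero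
  have hfacR : (Nat.choose (n + 1) j : ℝ) * j.factorial * (((n : ℝ) + 1 - j) * (n - j).factorial)
      = (n + 1).factorial := by
    have h3 : (n + 1).choose j * j.factorial * ((n + 1 - j) * (n - j).factorial)
        = (n + 1).factorial := by rw [← hfac2]; exact hfac
    have h4 := congrArg (Nat.cast : ℕ → ℝ) h3
    push_cast [Nat.cast_sub (show j ≤ n + 1 by omega)] at h4 ⊢
    linarith [h4]
  field_simp
  rw [show ((n - j : ℕ) + (j + 1)).factorial = (n+1).factorial from by rw [← hsplit],
      show ((n - j : ℕ) + (j + 1)).choose j = (n+1).choose j from by rw [← hsplit]]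
  linear_combination ((∏ x_1 ∈ Finset.range (n - j), (x - ↑x_1)) *
      (∏ i ∈ Finset.range j, (x - ↑n + ↑j - 1 - ↑i)) * (x - ↑n + ↑j)) * hfacR

theorem hilbert_induction_step (α : ℝ) (hα : 0 < α) (n i j : ℕ) (hn : 1 ≤ n)
    (hij : j ≤ i) (hi : i ≤ n) :
    Rhil α (n + 1) i j - Rhil α n i j = Chil α (n + 1) i j := by
  have hji : j ≤ n := hij.trans hi
  have hiR : (i : ℝ) ≤ n := by exact_mod_cast hi
  have hjR : (j : ℝ) ≤ n := by exact_mod_cast hji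
  have hc1 : (n : ℝ) + 1 - i ≠ 0 := by linarith
  have hc2 : (n : ℝ) + 1 - j ≠ 0 := by linarith
  have hch_i : (Nat.choose (n + 1) i : ℝ) ≠ 0 :=
    Nat.cast_ne_zero.2 (Nat.choose_pos (by omega)).ne'
  have hch_j : (Nat.choose (n + 1) j : ℝ) ≠ 0 :=
    Nat.cast_ne_zero.2 (Nat.choose_pos (by omega)).ne'
  have e1 : gbinom (α + ((n : ℝ) + 1) + i) (n + 1 - j)
      = (α + n + i + 1) / ((n : ℝ) + 1 - j) * gbinom (α + n + i) (n - j) := by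
    rw [show n + 1 - j = (n - j) + 1 from by omega,
        show α + ((n : ℝ) + 1) + i = (α + n + i) + 1 from by ring,
        gbinom_succ_succ, Nat.cast_sub hji]
    ring
  have e2 : gbinom (α + ((n : ℝ) + 1) + j) (n + 1 - i)
      = (α + n + j + 1) / ((n : ℝ) + 1 - i) * gbinom (α + n + j) (n - i) := by
    rw [show n + 1 - i = (n - i) + 1 from by omega,
        show α + ((n : ℝ) + 1) + j = (α + n + j) + 1 from by ring,
        gbinom_succ_succ, Nat.cast_sub hi]
    ring
  have e3 : gbinom (α + ((n : ℝ) + 1) + i - 1) (n + 1)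
      = (α + i + j) * gbinom (α + n + i) (n - j) * gbinom (α + i + j - 1) j /
        ((Nat.choose (n + 1) j : ℝ) * ((n : ℝ) + 1 - j)) := by
    have h := gbinom_split (α + n + i) n j hji
    rw [show α + (n : ℝ) + i - n + j - 1 = α + i + j - 1 from by ring,
        show α + (n : ℝ) + i - n + j = α + i + j from by ring] at h
    rw [show α + ((n : ℝ) + 1) + i - 1 = α + n + i from by ring,
        eq_div_iff (mul_ne_zero hch_j hc2)]
    linear_combination h
  have e4 : gbinom (α + ((n : ℝ) + 1) + j - 1) (n + 1)
      = (α + i + j) * gbinom (α + n + j) (n - i) * gbinom (α + i + j - 1) i /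
        ((Nat.choose (n + 1) i : ℝ) * ((n : ℝ) + 1 - i)) := by
    have h := gbinom_split (α + n + j) n i hi
    rw [show α + (n : ℝ) + j - n + i - 1 = α + i + j - 1 from by ring,
        show α + (n : ℝ) + j - n + i = α + i + j from by ring] at h
    rw [show α + ((n : ℝ) + 1) + j - 1 = α + n + j from by ring,
        eq_div_iff (mul_ne_zero hch_i hc1)]
    linear_combination h
  have e5 : gbinom ((n : ℝ) + 1) i = (Nat.choose (n + 1) i : ℝ) := by
    rw [show ((n : ℝ) + 1) = ((n + 1 : ℕ) : ℝ) from by push_cast; ring, gbinom_nat]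
  have e6 : gbinom ((n : ℝ) + 1) j = (Nat.choose (n + 1) j : ℝ) := by
    rw [show ((n : ℝ) + 1) = ((n + 1 : ℕ) : ℝ) from by push_cast; ring, gbinom_nat]
  unfold Rhil Chil
  push_cast
  rw [e1, e2, e3, e4, e5, e6]
  field_simp
  ring
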